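/- Among the tuples (γ, τ₁, τ₂, σ₂) in S₄ with σ₁ := (1 3 2) fixed (the 3-cycle sending 1↦3↦2↦1 and fixing 4) and satisfying σ₂ ∘ τ₂ ∘ τ₁ ∘ σ₁ = id, σ₂ of cycle type (2,2), τ₁, τ₂ transpositions, ⟨σ₁,σ₂,τ₁,τ₂⟩ transitive on {1,2,3,4}, γ² = id, γσ₁γ = σ₁⁻¹, γ(τ₁σ₁)γ = (τ₁σ₁)⁻¹, γ(τ₂τ₁σ₁)γ = (τ₂τ₁σ₁)⁻¹, there are exactly 3 tuples, and all 3 of them satisfy the monotonicity condition b₁ ≤ b₂, where τᵢ = (aᵢ,bᵢ) with aᵢ < bᵢ. -/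
import Mathlib

open Equiv

/-- The 3-cycle (1 3 2) of {1,2,3,4}, i.e. (on `Fin 4`, 0-indexed) 0 ↦ 2 ↦ 1 ↦ 0, fixing 3. -/
def sigma132 : Equiv.Perm (Fin 4) := Equiv.swap 0 1 * Equiv.swap 0 2

namespace Stmt14Aux

abbrev P4 := Perm (Fin 4)

def pmk (f g : Fin 4 → Fin 4) (h1 : Function.LeftInverse g f := by decide)
    (h2 : Function.RightInverse g f := by decide) : P4 := ⟨f, g, h1, h2⟩

def L : List P4 := [
  pmk ![0,1,2,3] ![0,1,2,3], pmk ![0,1,3,2] ![0,1,3,2], pmk ![0,2,1,3] ![0,2,1,3],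
  pmk ![0,2,3,1] ![0,3,1,2], pmk ![0,3,1,2] ![0,2,3,1], pmk ![0,3,2,1] ![0,3,2,1],
  pmk ![1,0,2,3] ![1,0,2,3], pmk ![1,0,3,2] ![1,0,3,2], pmk ![1,2,0,3] ![2,0,1,3],
  pmk ![1,2,3,0] ![3,0,1,2], pmk ![1,3,0,2] ![2,0,3,1], pmk ![1,3,2,0] ![3,0,2,1],
  pmk ![2,0,1,3] ![1,2,0,3], pmk ![2,0,3,1] ![1,3,0,2], pmk ![2,1,0,3] ![2,1,0,3],
  pmk ![2,1,3,0] ![3,1,0,2], pmk ![2,3,0,1] ![2,3,0,1], pmk ![2,3,1,0] ![3,2,0,1],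
  pmk ![3,0,1,2] ![1,2,3,0], pmk ![3,0,2,1] ![1,3,2,0], pmk ![3,1,0,2] ![2,1,3,0],
  pmk ![3,1,2,0] ![3,1,2,0], pmk ![3,2,0,1] ![2,3,1,0], pmk ![3,2,1,0] ![3,2,1,0]]

lemma L_nodup : L.Nodup := by decide

lemma L_complete : ∀ g : P4, g ∈ L := by
  have hcard : L.toFinset.card = Fintype.card P4 := by
    rw [List.toFinset_card_of_nodup L_nodup]
    simp [Fintype.card_perm]
    rfl
  intro g
  have h := Finset.eq_univ_of_card _ hcard
  have : g ∈ L.toFinset := h ▸ Finset.mem_univ g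
  simpa using this

def s1 : P4 × P4 × P4 × P4 :=
  (Equiv.swap 0 1, Equiv.swap 1 2, Equiv.swap 2 3, Equiv.swap 0 1 * Equiv.swap 2 3)
def s2 : P4 × P4 × P4 × P4 :=
  (Equiv.swap 0 2, Equiv.swap 0 1, Equiv.swap 1 3, Equiv.swap 0 2 * Equiv.swap 1 3)
def s3 : P4 × P4 × P4 × P4 :=
  (Equiv.swap 1 2, Equiv.swap 0 2, Equiv.swap 0 3, Equiv.swap 0 3 * Equiv.swap 1 2)

set_option maxRecDepth 40000 in
lemma master : L.Forall (fun g => ∀ a b c d : Fin 4, a ≠ b → c ≠ d →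
    g * g = 1 → g * sigma132 * g = sigma132⁻¹ →
    g * (Equiv.swap a b * sigma132) * g = (Equiv.swap a b * sigma132)⁻¹ →
    g * (Equiv.swap c d * Equiv.swap a b * sigma132) * g =
      (Equiv.swap c d * Equiv.swap a b * sigma132)⁻¹ →
    (Equiv.swap c d * Equiv.swap a b * sigma132)⁻¹ *
      (Equiv.swap c d * Equiv.swap a b * sigma132)⁻¹ = 1 →
    (∀ x, (Equiv.swap c d * Equiv.swap a b * sigma132)⁻¹ x ≠ x) →
    ((g, Equiv.swap a b, Equiv.swap c d, (Equiv.swap c d * Equiv.swap a b * sigma132)⁻¹) = s1 ∨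
     (g, Equiv.swap a b, Equiv.swap c d, (Equiv.swap c d * Equiv.swap a b * sigma132)⁻¹) = s2 ∨
     (g, Equiv.swap a b, Equiv.swap c d, (Equiv.swap c d * Equiv.swap a b * sigma132)⁻¹) = s3))
    := by decide

/-- Cycle type (2,2) in S₄ is equivalent to: involution without fixed points. -/
lemma ct_iff (σ : P4) : σ.cycleType = {2, 2} ↔ σ * σ = 1 ∧ ∀ x, σ x ≠ x := by
  constructor
  · intro h
    have hord : orderOf σ = 2 := by
      rw [← Equiv.Perm.lcm_cycleType, h]; rfl
    constructor
    · have := pow_orderOf_eq_one σ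
      rwa [hord, pow_two] at this
    · intro x hx
      have hsum : σ.support.card = 4 := by
        rw [← Equiv.Perm.sum_cycleType, h]; rfl
      have hu : σ.support = Finset.univ := Finset.eq_univ_of_card _ (by simp [hsum])
      have hmem : x ∈ σ.support := hu ▸ Finset.mem_univ x
      exact (Equiv.Perm.mem_support.mp hmem) hx
  · rintro ⟨h2, hf⟩
    have hsupp : σ.support = Finset.univ :=
      Finset.eq_univ_iff_forall.mpr fun x => Equiv.Perm.mem_support.mpr (hf x)
    have hsum : σ.cycleType.sum = 4 := by
      rw [Equiv.Perm.sum_cycleType, hsupp]; rfl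
    have hmem : ∀ n ∈ σ.cycleType, n = 2 := by
      intro n hn
      have h1 : 2 ≤ n := Equiv.Perm.two_le_of_mem_cycleType hn
      have hd : n ∣ 2 := (Equiv.Perm.dvd_of_mem_cycleType hn).trans
        (orderOf_dvd_of_pow_eq_one (by rw [pow_two]; exact h2))
      have := Nat.le_of_dvd (by norm_num) hd
      omega
    have hrep := Multiset.eq_replicate_of_mem hmem
    rw [hrep] at hsum ⊢
    rw [Multiset.sum_replicate, smul_eq_mul] at hsum
    have hc : Multiset.card σ.cycleType = 2 := by omega
    rw [hc]
    rfl

/-- Transitivity is automatic once σ₂ has no fixed points. -/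
lemma trans_of (σ₂ τ₁ τ₂ : P4) (hf : ∀ x, σ₂ x ≠ x) :
    ∀ x y : Fin 4, ∃ g ∈ Subgroup.closure {sigma132, σ₂, τ₁, τ₂}, g x = y := by
  set H := Subgroup.closure {sigma132, σ₂, τ₁, τ₂} with hH
  have hs : sigma132 ∈ H := Subgroup.subset_closure (by left; rfl)
  have hσ : σ₂ ∈ H := Subgroup.subset_closure (by right; left; rfl)
  have hall : ∀ z : Fin 4, z ≠ 3 → z = 0 ∨ z = 1 ∨ z = 2 := by decide
  have key : ∀ y : Fin 4, ∃ g ∈ H, g 3 = y := by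
    intro y
    by_cases hy3 : y = 3
    · exact ⟨1, H.one_mem, by simp [hy3]⟩
    have hcase := hall _ (hf 3)
    have hycase := hall _ hy3
    rcases hcase with h|h|h <;> rcases hycase with rfl|rfl|rfl
    · exact ⟨sigma132 ^ 0 * σ₂, H.mul_mem (H.pow_mem hs _) hσ,
        by rw [Equiv.Perm.mul_apply, h]; decide⟩
    · exact ⟨sigma132 ^ 2 * σ₂, H.mul_mem (H.pow_mem hs _) hσ,
        by rw [Equiv.Perm.mul_apply, h]; decide⟩
    · exact ⟨sigma132 ^ 1 * σ₂, H.mul_mem (H.pow_mem hs _) hσ,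
        by rw [Equiv.Perm.mul_apply, h]; decide⟩
    · exact ⟨sigma132 ^ 1 * σ₂, H.mul_mem (H.pow_mem hs _) hσ,
        by rw [Equiv.Perm.mul_apply, h]; decide⟩
    · exact ⟨sigma132 ^ 0 * σ₂, H.mul_mem (H.pow_mem hs _) hσ,
        by rw [Equiv.Perm.mul_apply, h]; decide⟩
    · exact ⟨sigma132 ^ 2 * σ₂, H.mul_mem (H.pow_mem hs _) hσ,
        by rw [Equiv.Perm.mul_apply, h]; decide⟩
    · exact ⟨sigma132 ^ 2 * σ₂, H.mul_mem (H.pow_mem hs _) hσ,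
        by rw [Equiv.Perm.mul_apply, h]; decide⟩
    · exact ⟨sigma132 ^ 1 * σ₂, H.mul_mem (H.pow_mem hs _) hσ,
        by rw [Equiv.Perm.mul_apply, h]; decide⟩
    · exact ⟨sigma132 ^ 0 * σ₂, H.mul_mem (H.pow_mem hs _) hσ,
        by rw [Equiv.Perm.mul_apply, h]; decide⟩
  intro x y
  obtain ⟨gx, hgx, hgx3⟩ := key x
  obtain ⟨gy, hgy, hgy3⟩ := key y
  refine ⟨gy * gx⁻¹, H.mul_mem hgy (H.inv_mem hgx), ?_⟩
  have hxx : gx⁻¹ x = 3 := by rw [← hgx3]; simp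
  rw [Equiv.Perm.mul_apply, hxx, hgy3]

/-- The full condition of the statement. -/
def Cond (p : P4 × P4 × P4 × P4) : Prop :=
  let γ := p.1; let τ₁ := p.2.1; let τ₂ := p.2.2.1; let σ₂ := p.2.2.2;
  σ₂ * τ₂ * τ₁ * sigma132 = 1 ∧
  σ₂.cycleType = {2, 2} ∧
  τ₁.IsSwap ∧ τ₂.IsSwap ∧
  (∀ x y : Fin 4, ∃ g ∈ Subgroup.closure {sigma132, σ₂, τ₁, τ₂}, g x = y) ∧
  γ * γ = 1 ∧ γ * sigma132 * γ = sigma132⁻¹ ∧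
  γ * (τ₁ * sigma132) * γ = (τ₁ * sigma132)⁻¹ ∧
  γ * (τ₂ * τ₁ * sigma132) * γ = (τ₂ * τ₁ * sigma132)⁻¹

lemma cond_forward {p : P4 × P4 × P4 × P4} (h : Cond p) : p = s1 ∨ p = s2 ∨ p = s3 := by
  obtain ⟨γ, τ₁, τ₂, σ₂⟩ := p
  obtain ⟨h1, h2, ⟨a, b, hab, rfl⟩, ⟨c, d, hcd, rfl⟩, _, h5, h6, h7, h8⟩ := h
  obtain ⟨h2a, h2b⟩ := (ct_iff σ₂).mp h2
  have hσ : σ₂ = (Equiv.swap c d * Equiv.swap a b * sigma132)⁻¹ := by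
    rw [eq_inv_iff_mul_eq_one]
    simpa [mul_assoc] using h1
  subst hσ
  have hm := List.forall_iff_forall_mem.mp master γ (L_complete γ)
  exact hm a b c d hab hcd h5 h6 h7 h8 h2a h2b

lemma cond_s1 : Cond s1 := by
  refine ⟨by decide, (ct_iff _).mpr (by decide), ⟨1, 2, by decide, rfl⟩,
    ⟨2, 3, by decide, rfl⟩, trans_of _ _ _ (by decide), by decide, by decide, by decide,
    by decide⟩

lemma cond_s2 : Cond s2 := by
  refine ⟨by decide, (ct_iff _).mpr (by decide), ⟨0, 1, by decide, rfl⟩,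
    ⟨1, 3, by decide, rfl⟩, trans_of _ _ _ (by decide), by decide, by decide, by decide,
    by decide⟩

lemma cond_s3 : Cond s3 := by
  refine ⟨by decide, (ct_iff _).mpr (by decide), ⟨0, 2, by decide, rfl⟩,
    ⟨0, 3, by decide, rfl⟩, trans_of _ _ _ (by decide), by decide, by decide, by decide,
    by decide⟩

lemma cond_iff (p : P4 × P4 × P4 × P4) : Cond p ↔ p ∈ ({s1, s2, s3} : Finset _) := by
  constructor
  · intro h
    rcases cond_forward h with rfl | rfl | rfl <;> simp
  · intro h
    simp only [Finset.mem_insert, Finset.mem_singleton] at h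
    rcases h with rfl | rfl | rfl
    exacts [cond_s1, cond_s2, cond_s3]

end Stmt14Aux

open Stmt14Aux in
theorem stmt_14 :
    Nat.card {p : Equiv.Perm (Fin 4) × Equiv.Perm (Fin 4) × Equiv.Perm (Fin 4) ×
        Equiv.Perm (Fin 4) //
      let γ := p.1; let τ₁ := p.2.1; let τ₂ := p.2.2.1; let σ₂ := p.2.2.2;
      σ₂ * τ₂ * τ₁ * sigma132 = 1 ∧
      σ₂.cycleType = {2, 2} ∧
      τ₁.IsSwap ∧ τ₂.IsSwap ∧
      (∀ x y : Fin 4, ∃ g ∈ Subgroup.closure {sigma132, σ₂, τ₁, τ₂}, g x = y) ∧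
      γ * γ = 1 ∧ γ * sigma132 * γ = sigma132⁻¹ ∧
      γ * (τ₁ * sigma132) * γ = (τ₁ * sigma132)⁻¹ ∧
      γ * (τ₂ * τ₁ * sigma132) * γ = (τ₂ * τ₁ * sigma132)⁻¹} = 3 ∧
    ∀ γ τ₁ τ₂ σ₂ : Equiv.Perm (Fin 4),
      σ₂ * τ₂ * τ₁ * sigma132 = 1 →
      σ₂.cycleType = {2, 2} →
      τ₁.IsSwap → τ₂.IsSwap →
      (∀ x y : Fin 4, ∃ g ∈ Subgroup.closure {sigma132, σ₂, τ₁, τ₂}, g x = y) →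
      γ * γ = 1 → γ * sigma132 * γ = sigma132⁻¹ →
      γ * (τ₁ * sigma132) * γ = (τ₁ * sigma132)⁻¹ →
      γ * (τ₂ * τ₁ * sigma132) * γ = (τ₂ * τ₁ * sigma132)⁻¹ →
      ∃ a₁ b₁ a₂ b₂ : Fin 4, a₁ < b₁ ∧ a₂ < b₂ ∧
        τ₁ = Equiv.swap a₁ b₁ ∧ τ₂ = Equiv.swap a₂ b₂ ∧ b₁ ≤ b₂ := by
  constructor
  · have he : ∀ p : P4 × P4 × P4 × P4,
        (let γ := p.1; let τ₁ := p.2.1; let τ₂ := p.2.2.1; let σ₂ := p.2.2.2;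
        σ₂ * τ₂ * τ₁ * sigma132 = 1 ∧
        σ₂.cycleType = {2, 2} ∧
        τ₁.IsSwap ∧ τ₂.IsSwap ∧
        (∀ x y : Fin 4, ∃ g ∈ Subgroup.closure {sigma132, σ₂, τ₁, τ₂}, g x = y) ∧
        γ * γ = 1 ∧ γ * sigma132 * γ = sigma132⁻¹ ∧
        γ * (τ₁ * sigma132) * γ = (τ₁ * sigma132)⁻¹ ∧
        γ * (τ₂ * τ₁ * sigma132) * γ = (τ₂ * τ₁ * sigma132)⁻¹) ↔
        p ∈ ({s1, s2, s3} : Finset _) := cond_iff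
    rw [Nat.card_congr (Equiv.subtypeEquivRight he), Nat.card_eq_finsetCard]
    decide
  · intro γ τ₁ τ₂ σ₂ h1 h2 h3 h4 h5 h6 h7 h8 h9
    have hc : Cond (γ, τ₁, τ₂, σ₂) := ⟨h1, h2, h3, h4, h5, h6, h7, h8, h9⟩
    rcases cond_forward hc with h | h | h <;>
      obtain ⟨rfl, rfl, rfl, rfl⟩ := Prod.mk.injEq .. ▸ h <;> [
        exact ⟨1, 2, 2, 3, by decide, by decide, rfl, rfl, by decide⟩;
        exact ⟨0, 1, 1, 3, by decide, by decide, rfl, rfl, by decide⟩;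
        exact ⟨0, 2, 0, 3, by decide, by decide, rfl, rfl, by decide⟩]
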